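/- Let M be a filtered module over a filtered ring R with increasing exhaustive filtrations such that R_m · M_n ⊆ M_{m+n}, and suppose gr(R) = S is commutative Noetherian. If N ⊆ M is a submodule with the induced filtration and gr(M) is a finitely generated S-module, then gr(N) and gr(M/N) are finitely generated S-modules, and Supp(gr(M)) = Supp(gr(N)) ∪ Supp(gr(M/N)). -/
import Mathlib

/-- Let `M` be a filtered module over a filtered ring `R` with `S = gr(R)`
commutative Noetherian, and let `N ⊆ M` be a submodule with the induced filtration (and `M/N`
with the quotient filtration), so that the associated graded modules sit in a short exact
sequence of `S`-modules `0 → gr(N) → gr(M) → gr(M/N) → 0` (this exactness, recalled in the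
paper, is taken as the hypothesis `hij`/`hpq` below).  If `gr(M)` is a finitely generated
`S`-module, then so are `gr(N)` and `gr(M/N)`, and
`Supp(gr M) = Supp(gr N) ∪ Supp(gr(M/N))`. -/
theorem stmt13 (S : Type*) [CommRing S] [IsNoetherianRing S]
    (grN grM grQ : Type*) [AddCommGroup grN] [Module S grN]
    [AddCommGroup grM] [Module S grM] [AddCommGroup grQ] [Module S grQ]
    (ι : grN →ₗ[S] grM) (π : grM →ₗ[S] grQ)
    (hι : Function.Injective ι) (hπ : Function.Surjective π)
    (hexact : LinearMap.range ι = LinearMap.ker π)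
    (hM : Module.Finite S grM) :
    (Module.Finite S grN ∧ Module.Finite S grQ) ∧
      Module.support S grM = Module.support S grN ∪ Module.support S grQ := by
  have hex : Function.Exact ι π := LinearMap.exact_iff.mpr hexact.symm
  have : IsNoetherian S grM := isNoetherian_of_isNoetherianRing_of_finite S grM
  refine ⟨⟨?_, Module.Finite.of_surjective π hπ⟩,
    Module.support_of_exact hex hι hπ⟩
  exact Module.Finite.of_injective ι hι
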